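/- arXiv:2105.03513 — 7 statements merged into one kernel-verified Lean document; each statement's English description precedes it below -/
import Mathlib

section
/- For a prime p, the number of monic cubic polynomials over the finite field F_p with zero coefficient of T^2 (i.e. trace-zero) that are irreducible over F_p equals (p^2 - 1)/3. -/
open Polynomial Finset

namespace IrredCubicAux

variable {p : ℕ} [Fact p.Prime]

private lemma pow_ppp (x : GaloisField p 3) : ((x ^ p) ^ p) ^ p = x := by
  haveI : Fintype (GaloisField p 3) := Fintype.ofFinite _
  have hc : Fintype.card (GaloisField p 3) = p ^ 3 := by
    rw [← Nat.card_eq_fintype_card, GaloisField.card p 3 (by norm_num)]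
  have := FiniteField.pow_card x
  rw [hc] at this
  rw [← pow_mul, ← pow_mul, show p * (p * p) = p ^ 3 by ring, this]

private lemma frob_inj {a b : GaloisField p 3} (h : a ^ p = b ^ p) : a = b := by
  have h2 : (a - b) ^ p = 0 := by rw [sub_pow_char, h, sub_self]
  have h3 : a - b = 0 := pow_eq_zero_iff (Fact.out : p.Prime).ne_zero |>.mp h2
  exact sub_eq_zero.mp h3

private lemma frob_fixed {x : GaloisField p 3} :
    x ^ p = x ↔ ∃ c, algebraMap (ZMod p) (GaloisField p 3) c = x := by
  classical
  haveI : Fintype (GaloisField p 3) := Fintype.ofFinite _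
  constructor
  · intro hx
    have hp1 : 1 < p := (Fact.out : p.Prime).one_lt
    set q : Polynomial (GaloisField p 3) := X ^ p - X with hq
    have hq0 : q ≠ 0 := FiniteField.X_pow_card_sub_X_ne_zero _ hp1
    have hdeg : q.natDegree = p := FiniteField.X_pow_card_sub_X_natDegree_eq _ hp1
    have hsub : (Finset.univ.image (algebraMap (ZMod p) (GaloisField p 3))) ⊆
        q.roots.toFinset := by
      intro y hy
      obtain ⟨c, _, rfl⟩ := Finset.mem_image.mp hy
      rw [Multiset.mem_toFinset, mem_roots hq0]
      simp only [IsRoot, hq, eval_sub, eval_pow, eval_X, sub_eq_zero, ← map_pow,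
        ZMod.pow_card]
    have hcard : (Finset.univ.image (algebraMap (ZMod p) (GaloisField p 3))).card = p := by
      rw [Finset.card_image_of_injective _ (algebraMap (ZMod p) _).injective,
        Finset.card_univ, ZMod.card]
    have hle : q.roots.toFinset.card ≤ p :=
      le_trans (Multiset.toFinset_card_le _) (le_trans (Polynomial.card_roots' q) hdeg.le)
    have heq : Finset.univ.image (algebraMap (ZMod p) (GaloisField p 3)) = q.roots.toFinset :=
      Finset.eq_of_subset_of_card_le hsub (by rw [hcard]; exact hle)
    have hxr : x ∈ q.roots.toFinset := by
      rw [Multiset.mem_toFinset, mem_roots hq0]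
      simp only [IsRoot, hq, eval_sub, eval_pow, eval_X, sub_eq_zero, hx]
    rw [← heq] at hxr
    obtain ⟨c, _, hc⟩ := Finset.mem_image.mp hxr
    exact ⟨c, hc⟩
  · rintro ⟨c, rfl⟩
    rw [← map_pow, ZMod.pow_card]

private lemma algmap_pow (a : ZMod p) :
    (algebraMap (ZMod p) (GaloisField p 3) a) ^ p = algebraMap (ZMod p) (GaloisField p 3) a := by
  rw [← map_pow, ZMod.pow_card]

private lemma e2_mem (x : GaloisField p 3) :
    ∃ c, algebraMap (ZMod p) (GaloisField p 3) c
      = x * x ^ p + x ^ p * (x ^ p) ^ p + (x ^ p) ^ p * x := by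
  apply frob_fixed.mp
  rw [add_pow_char, add_pow_char, mul_pow, mul_pow, mul_pow, pow_ppp x]
  ring

private lemma e3_mem (x : GaloisField p 3) :
    ∃ c, algebraMap (ZMod p) (GaloisField p 3) c = -(x * x ^ p * (x ^ p) ^ p) := by
  obtain ⟨c, hc⟩ : ∃ c, algebraMap (ZMod p) (GaloisField p 3) c = x * x ^ p * (x ^ p) ^ p := by
    apply frob_fixed.mp
    rw [mul_pow, mul_pow, pow_ppp x]
    ring
  exact ⟨-c, by rw [map_neg, hc]⟩

private lemma card_trace_ker :
    Nat.card {x : GaloisField p 3 // x + x ^ p + (x ^ p) ^ p = 0} = p ^ 2 := by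
  classical
  haveI : Fintype (GaloisField p 3) := Fintype.ofFinite _
  have hprime : p.Prime := Fact.out
  set L : GaloisField p 3 →ₗ[ZMod p] GaloisField p 3 :=
    { toFun := fun x => x + x ^ p + (x ^ p) ^ p
      map_add' := by
        intro x y
        simp only [add_pow_char]
        ring
      map_smul' := by
        intro c x
        simp only [Algebra.smul_def, mul_pow, ← map_pow, ZMod.pow_card, RingHom.id_apply]
        ring } with hL
  have hLapp : ∀ x, L x = x + x ^ p + (x ^ p) ^ p := fun x => rfl
  -- range of L lands in the prime field
  have hrangemem : ∀ x, ∃ c, algebraMap (ZMod p) (GaloisField p 3) c = L x := by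
    intro x
    apply frob_fixed.mp
    rw [hLapp, add_pow_char, add_pow_char, pow_ppp x]
    ring
  -- L is not zero
  have hLne : ∃ x, L x ≠ 0 := by
    by_contra hcon
    push_neg at hcon
    set g : Polynomial (GaloisField p 3) := X ^ (p * p) + (X ^ p + X) with hg
    have hple : 1 < p := hprime.one_lt
    have hg0 : g ≠ 0 := by
      intro h0
      have : g.coeff (p * p) = 1 := by
        have h1 : ¬ (p * p = p) := by nlinarith
        have h2 : ¬ ((1 : ℕ) = p * p) := by nlinarith
        rw [hg]
        simp only [coeff_add, coeff_X_pow, coeff_X, if_pos rfl, if_neg h1, if_neg h2]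
        norm_num
      rw [h0] at this
      simp at this
    have hdeg : g.natDegree ≤ p * p := by
      rw [hg]
      refine le_trans (natDegree_add_le _ _) ?_
      simp only [natDegree_X_pow, max_le_iff]
      refine ⟨le_rfl, le_trans (natDegree_add_le _ _) ?_⟩
      simp only [natDegree_X_pow, natDegree_X, max_le_iff]
      constructor <;> nlinarith
    have hsub : (Finset.univ : Finset (GaloisField p 3)) ⊆ g.roots.toFinset := by
      intro x _
      rw [Multiset.mem_toFinset, mem_roots hg0]
      have : eval x g = L x := by
        rw [hg, hLapp]
        simp only [eval_add, eval_pow, eval_X]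
        rw [pow_mul]
        ring
      rw [IsRoot, this, hcon]
    have hcard3 : Fintype.card (GaloisField p 3) = p ^ 3 := by
      rw [← Nat.card_eq_fintype_card, GaloisField.card p 3 (by norm_num)]
    have : p ^ 3 ≤ p * p := by
      calc p ^ 3 = (Finset.univ : Finset (GaloisField p 3)).card := by
            rw [Finset.card_univ, hcard3]
        _ ≤ g.roots.toFinset.card := Finset.card_le_card hsub
        _ ≤ Multiset.card g.roots := Multiset.toFinset_card_le _
        _ ≤ g.natDegree := Polynomial.card_roots' g
        _ ≤ p * p := hdeg
    nlinarith [pow_lt_pow_right₀ hple (show 2 < 3 by norm_num)]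
  -- finrank computations
  have hW : LinearMap.range L ≤ LinearMap.range (Algebra.linearMap (ZMod p) (GaloisField p 3)) := by
    rintro y ⟨x, rfl⟩
    obtain ⟨c, hc⟩ := hrangemem x
    exact ⟨c, hc⟩
  have hWrank : Module.finrank (ZMod p)
      (LinearMap.range (Algebra.linearMap (ZMod p) (GaloisField p 3))) = 1 := by
    rw [LinearMap.finrank_range_of_inj]
    · exact Module.finrank_self _
    · exact fun a b h => (algebraMap (ZMod p) (GaloisField p 3)).injective h
  have hrle : Module.finrank (ZMod p) (LinearMap.range L) ≤ 1 :=
    hWrank ▸ Submodule.finrank_mono hW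
  have hrne : LinearMap.range L ≠ ⊥ := by
    intro hbot
    have h0 : L = 0 := (LinearMap.range_eq_bot (f := L)).mp hbot
    obtain ⟨x, hx⟩ := hLne
    exact hx (by rw [h0]; rfl)
  have hrpos : Module.finrank (ZMod p) (LinearMap.range L) ≠ 0 := by
    intro h0
    exact hrne (Submodule.finrank_eq_zero.mp h0)
  have hrank1 : Module.finrank (ZMod p) (LinearMap.range L) = 1 := le_antisymm hrle
    (Nat.one_le_iff_ne_zero.mpr hrpos)
  have hrn := LinearMap.finrank_range_add_finrank_ker L
  rw [hrank1, GaloisField.finrank p (by norm_num : 3 ≠ 0)] at hrn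
  have hker : Module.finrank (ZMod p) (LinearMap.ker L) = 2 := by omega
  haveI : Fintype (LinearMap.ker L) := Fintype.ofFinite _
  have hcardker : Fintype.card (LinearMap.ker L) = p ^ 2 := by
    rw [Module.card_eq_pow_finrank (K := ZMod p) (V := LinearMap.ker L), hker, ZMod.card]
  calc Nat.card {x : GaloisField p 3 // x + x ^ p + (x ^ p) ^ p = 0}
      = Nat.card (LinearMap.ker L) := Nat.card_congr (Equiv.subtypeEquivRight (fun x => by
        rw [LinearMap.mem_ker, hLapp]))
    _ = p ^ 2 := by rw [Nat.card_eq_fintype_card, hcardker]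

private lemma f_monic (a b : ZMod p) : (X ^ 3 + C a * X + C b : (ZMod p)[X]).Monic := by
  monicity!

private lemma f_deg (a b : ZMod p) : (X ^ 3 + C a * X + C b : (ZMod p)[X]).natDegree = 3 := by
  compute_degree!

private lemma irr_iff (a b : ZMod p) :
    Irreducible (X ^ 3 + C a * X + C b : (ZMod p)[X]) ↔
      ∀ r : ZMod p, r ^ 3 + a * r + b ≠ 0 := by
  rw [(f_monic a b).irreducible_iff_roots_eq_zero_of_degree_le_three
      (by rw [f_deg]; norm_num) (by rw [f_deg])]
  rw [Multiset.eq_zero_iff_forall_notMem]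
  constructor
  · intro h r hr
    exact h r (by rw [mem_roots (f_monic a b).ne_zero]; simpa [IsRoot] using hr)
  · intro h r hr
    rw [mem_roots (f_monic a b).ne_zero] at hr
    exact h r (by simpa [IsRoot] using hr)

private lemma distinct {x : GaloisField p 3} (hx : x ^ p ≠ x) :
    x ≠ x ^ p ∧ x ^ p ≠ (x ^ p) ^ p ∧ x ≠ (x ^ p) ^ p := by
  refine ⟨fun h => hx h.symm, ?_, ?_⟩
  · intro h
    exact hx (frob_inj h).symm
  · intro h
    apply hx
    have := congrArg (· ^ p) h
    rw [pow_ppp] at this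
    exact this.symm ▸ (by rw [← this])

private lemma factor_eq (x w : GaloisField p 3) (ht : x + x ^ p + (x ^ p) ^ p = 0) :
    (w - x) * (w - x ^ p) * (w - (x ^ p) ^ p)
      = w ^ 3 + (x * x ^ p + x ^ p * (x ^ p) ^ p + (x ^ p) ^ p * x) * w
        - x * x ^ p * (x ^ p) ^ p := by
  linear_combination (-(w ^ 2)) * ht

private lemma frob_root {A B x : GaloisField p 3} (hA : A ^ p = A) (hB : B ^ p = B)
    (hx : x ^ 3 + A * x + B = 0) : (x ^ p) ^ 3 + A * x ^ p + B = 0 := by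
  have h := congrArg (· ^ p) hx
  rw [add_pow_char, add_pow_char, mul_pow, hA, hB, zero_pow (Fact.out : p.Prime).ne_zero,
    pow_right_comm] at h
  exact h

private lemma irr_of_x {x : GaloisField p 3} (hx : x ^ p ≠ x)
    (ht : x + x ^ p + (x ^ p) ^ p = 0) {a b : ZMod p}
    (ha : algebraMap (ZMod p) (GaloisField p 3) a
      = x * x ^ p + x ^ p * (x ^ p) ^ p + (x ^ p) ^ p * x)
    (hb : algebraMap (ZMod p) (GaloisField p 3) b = -(x * x ^ p * (x ^ p) ^ p)) :
    Irreducible (X ^ 3 + C a * X + C b : (ZMod p)[X]) := by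
  rw [irr_iff]
  intro r hr
  have hdis := distinct hx
  set R := algebraMap (ZMod p) (GaloisField p 3) r with hR
  have hRmap : R ^ 3 + algebraMap (ZMod p) (GaloisField p 3) a * R
      + algebraMap (ZMod p) (GaloisField p 3) b = 0 := by
    rw [hR, ← map_pow, ← map_mul, ← map_add, ← map_add, hr, map_zero]
  rw [ha, hb] at hRmap
  have hfact : (R - x) * (R - x ^ p) * (R - (x ^ p) ^ p) = 0 := by
    rw [factor_eq x R ht]
    linear_combination hRmap
  have hRp : R ^ p = R := by rw [hR]; exact algmap_pow r
  rcases mul_eq_zero.mp hfact with h | h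
  · rcases mul_eq_zero.mp h with h | h
    · -- R = x
      have : R = x := sub_eq_zero.mp h
      exact hx (by rw [← this, hRp])
    · -- R = x^p : then (x^p)^p = x^p
      have hRx : R = x ^ p := sub_eq_zero.mp h
      exact hdis.2.1 (by rw [← hRx, hRp])
  · -- R = (x^p)^p : then x = (x^p)^p
    have hRx : R = (x ^ p) ^ p := sub_eq_zero.mp h
    apply hdis.2.2
    have := pow_ppp x
    rw [← hRx, hRp, hRx] at this
    · exact this.symm

set_option synthInstance.maxHeartbeats 400000 in
set_option maxHeartbeats 1000000 in
private lemma exists_x {a b : ZMod p}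
    (hirr : Irreducible (X ^ 3 + C a * X + C b : (ZMod p)[X])) :
    ∃ x : GaloisField p 3, x ^ p ≠ x ∧ x + x ^ p + (x ^ p) ^ p = 0 ∧
      algebraMap (ZMod p) (GaloisField p 3) a
        = x * x ^ p + x ^ p * (x ^ p) ^ p + (x ^ p) ^ p * x ∧
      algebraMap (ZMod p) (GaloisField p 3) b = -(x * x ^ p * (x ^ p) ^ p) := by
  classical
  haveI : Fintype (GaloisField p 3) := Fintype.ofFinite _
  haveI := Fact.mk hirr
  set f : (ZMod p)[X] := X ^ 3 + C a * X + C b with hf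
  have hf0 : f ≠ 0 := (f_monic a b).ne_zero
  let pb := AdjoinRoot.powerBasis hf0
  haveI : Module.Finite (ZMod p) (AdjoinRoot f) := Module.Finite.of_basis pb.basis
  haveI : Finite (AdjoinRoot f) := Module.finite_of_finite (ZMod p)
  haveI : Fintype (AdjoinRoot f) := Fintype.ofFinite _
  have hcard : Fintype.card (AdjoinRoot f) = Fintype.card (GaloisField p 3) := by
    have hdim : pb.dim = 3 := by
      rw [AdjoinRoot.powerBasis_dim, f_deg]
    have hKcard : Fintype.card (GaloisField p 3) = p ^ 3 := by
      rw [← Nat.card_eq_fintype_card, GaloisField.card p 3 (by norm_num)]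
    rw [Module.card_fintype pb.basis, ZMod.card, hKcard, hdim, Fintype.card_fin]
  let e := FiniteField.algEquivOfCardEq (K := AdjoinRoot f) (K' := GaloisField p 3) p hcard
  set x := e (AdjoinRoot.root f) with hxdef
  set A := algebraMap (ZMod p) (GaloisField p 3) a with hA
  set B := algebraMap (ZMod p) (GaloisField p 3) b with hB
  have haev : (aeval (AdjoinRoot.root f)) f = 0 := by
    rw [AdjoinRoot.aeval_eq, AdjoinRoot.mk_self]
  have hval' : (aeval (AdjoinRoot.root f)) (X ^ 3 + C a * X + C b) = 0 := by
    rw [← hf]; exact haev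
  have hval : (AdjoinRoot.root f) ^ 3 + algebraMap (ZMod p) (AdjoinRoot f) a * AdjoinRoot.root f
      + algebraMap (ZMod p) (AdjoinRoot f) b = 0 := by
    simpa [map_add, map_mul, map_pow] using hval'
  have hx : x ^ 3 + A * x + B = 0 := by
    have h : e ((AdjoinRoot.root f) ^ 3 + algebraMap (ZMod p) (AdjoinRoot f) a * AdjoinRoot.root f
        + algebraMap (ZMod p) (AdjoinRoot f) b) = e 0 := by rw [hval]
    simp only [map_add, map_mul, map_pow, map_zero, AlgEquiv.commutes] at h
    rw [hxdef, hA, hB]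
    exact h
  -- x is not in the prime field
  have hxp : x ^ p ≠ x := by
    intro hfix
    obtain ⟨r, hr⟩ := frob_fixed.mp hfix
    have : r ^ 3 + a * r + b = 0 := by
      apply (algebraMap (ZMod p) (GaloisField p 3)).injective
      rw [map_zero, map_add, map_add, map_pow, map_mul, hr]
      rw [hA, hB] at hx
      exact hx
    exact (irr_iff a b).mp (hf ▸ hirr) r this
  have hdis := distinct hxp
  set y := x ^ p with hy
  set z := (x ^ p) ^ p with hz
  have hApow : A ^ p = A := algmap_pow a
  have hBpow : B ^ p = B := algmap_pow b
  have hyr : y ^ 3 + A * y + B = 0 := frob_root hApow hBpow hx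
  have hzr : z ^ 3 + A * z + B = 0 := frob_root hApow hBpow hyr
  have e1 : (x - y) * (x ^ 2 + x * y + y ^ 2 + A) = 0 := by linear_combination hx - hyr
  have e1' : x ^ 2 + x * y + y ^ 2 + A = 0 :=
    (mul_eq_zero.mp e1).resolve_left (sub_ne_zero.mpr hdis.1)
  have e2 : (y - z) * (y ^ 2 + y * z + z ^ 2 + A) = 0 := by linear_combination hyr - hzr
  have e2' : y ^ 2 + y * z + z ^ 2 + A = 0 :=
    (mul_eq_zero.mp e2).resolve_left (sub_ne_zero.mpr hdis.2.1)
  have h1 : (x - z) * (x + y + z) = 0 := by linear_combination e1' - e2'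
  have ht : x + y + z = 0 :=
    (mul_eq_zero.mp h1).resolve_left (sub_ne_zero.mpr hdis.2.2)
  have hA2 : A = x * y + y * z + z * x := by linear_combination e1' - (x + y) * ht
  have hB2 : B = -(x * y * z) := by linear_combination hx - x * hA2 - x ^ 2 * ht
  exact ⟨x, hxp, ht, hA2, hB2⟩

set_option maxHeartbeats 1000000 in
private lemma main_count :
    Nat.card {x : GaloisField p 3 // x ^ p ≠ x ∧ x + x ^ p + (x ^ p) ^ p = 0}
      = 3 * Nat.card {ab : ZMod p × ZMod p //
          Irreducible (X ^ 3 + C ab.1 * X + C ab.2 : (ZMod p)[X])} := by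
  classical
  haveI : Fintype (GaloisField p 3) := Fintype.ofFinite _
  set alg := algebraMap (ZMod p) (GaloisField p 3) with halg
  set inv : GaloisField p 3 → ZMod p := Function.invFun alg with hinvdef
  have hainv : ∀ c : ZMod p, inv (alg c) = c :=
    fun c => Function.leftInverse_invFun (alg.injective) c
  set φ : GaloisField p 3 → ZMod p × ZMod p :=
    fun x => (inv (x * x ^ p + x ^ p * (x ^ p) ^ p + (x ^ p) ^ p * x),
      inv (-(x * x ^ p * (x ^ p) ^ p))) with hφ
  have hφa : ∀ x : GaloisField p 3,
      alg ((φ x).1) = x * x ^ p + x ^ p * (x ^ p) ^ p + (x ^ p) ^ p * x := by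
    intro x
    obtain ⟨c, hc⟩ := e2_mem x
    rw [hφ]
    simp only
    rw [← hc, halg, hainv, ← halg, hc]
  have hφb : ∀ x : GaloisField p 3, alg ((φ x).2) = -(x * x ^ p * (x ^ p) ^ p) := by
    intro x
    obtain ⟨c, hc⟩ := e3_mem x
    rw [hφ]
    simp only
    rw [← hc, halg, hainv, ← halg, hc]
  set Rf : Finset (GaloisField p 3) :=
    univ.filter (fun x => x ^ p ≠ x ∧ x + x ^ p + (x ^ p) ^ p = 0) with hRf
  set Sf : Finset (ZMod p × ZMod p) :=
    univ.filter (fun ab => Irreducible (X ^ 3 + C ab.1 * X + C ab.2 : (ZMod p)[X])) with hSf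
  have hmem : ∀ x ∈ Rf, φ x ∈ Sf := by
    intro x hx
    rw [hRf, Finset.mem_filter] at hx
    rw [hSf, Finset.mem_filter]
    exact ⟨Finset.mem_univ _, irr_of_x hx.2.1 hx.2.2 (hφa x) (hφb x)⟩
  have hcount := Finset.card_eq_sum_card_fiberwise hmem
  have hfiber : ∀ ab ∈ Sf, (Rf.filter fun x => φ x = ab).card = 3 := by
    intro ab hab
    rw [hSf, Finset.mem_filter] at hab
    obtain ⟨x, hx, ht, hA, hB⟩ := exists_x hab.2
    have hdis := distinct hx
    have hty : x ^ p + (x ^ p) ^ p + ((x ^ p) ^ p) ^ p = 0 := by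
      rw [pow_ppp]; linear_combination ht
    have htz : (x ^ p) ^ p + ((x ^ p) ^ p) ^ p + (((x ^ p) ^ p) ^ p) ^ p = 0 := by
      rw [pow_ppp]; linear_combination ht
    have key : Rf.filter (fun w => φ w = ab) = {x, x ^ p, (x ^ p) ^ p} := by
      ext w
      simp only [Finset.mem_filter, Finset.mem_insert, Finset.mem_singleton, hRf,
        Finset.mem_univ, true_and]
      constructor
      · rintro ⟨⟨hw1, hw2⟩, hw3⟩
        have hwa : alg ab.1 = w * w ^ p + w ^ p * (w ^ p) ^ p + (w ^ p) ^ p * w := by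
          have h := hφa w
          rw [hw3] at h
          exact h
        have hwb : alg ab.2 = -(w * w ^ p * (w ^ p) ^ p) := by
          have h := hφb w
          rw [hw3] at h
          exact h
        have hA' : alg ab.1 = x * x ^ p + x ^ p * (x ^ p) ^ p + (x ^ p) ^ p * x := hA
        have hB' : alg ab.2 = -(x * x ^ p * (x ^ p) ^ p) := hB
        have hwroot : w ^ 3 + (w * w ^ p + w ^ p * (w ^ p) ^ p + (w ^ p) ^ p * w) * w
            - w * w ^ p * (w ^ p) ^ p = 0 := by
          linear_combination (w ^ 2) * hw2
        have hfact : (w - x) * (w - x ^ p) * (w - (x ^ p) ^ p) = 0 := by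
          rw [factor_eq x w ht]
          linear_combination hwroot - w * hA' + w * hwa - hB' + hwb
        rcases mul_eq_zero.mp hfact with h | h
        · rcases mul_eq_zero.mp h with h | h
          · exact Or.inl (sub_eq_zero.mp h)
          · exact Or.inr (Or.inl (sub_eq_zero.mp h))
        · exact Or.inr (Or.inr (sub_eq_zero.mp h))
      · have hxmem : (x ^ p ≠ x ∧ x + x ^ p + (x ^ p) ^ p = 0) ∧ φ x = ab := by
          refine ⟨⟨hx, ht⟩, ?_⟩
          have h1 : (φ x).1 = ab.1 := by
            apply alg.injective
            rw [hφa x, hA]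
          have h2 : (φ x).2 = ab.2 := by
            apply alg.injective
            rw [hφb x, hB]
          exact Prod.ext h1 h2
        have hymem : ((x ^ p) ^ p ≠ x ^ p ∧ x ^ p + (x ^ p) ^ p + ((x ^ p) ^ p) ^ p = 0)
            ∧ φ (x ^ p) = ab := by
          refine ⟨⟨fun h => hdis.2.1 h.symm, hty⟩, ?_⟩
          have h1 : (φ (x ^ p)).1 = ab.1 := by
            apply alg.injective
            rw [hφa (x ^ p), pow_ppp, hA]
            ring
          have h2 : (φ (x ^ p)).2 = ab.2 := by
            apply alg.injective
            rw [hφb (x ^ p), pow_ppp, hB]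
            ring
          exact Prod.ext h1 h2
        have hzmem : (((x ^ p) ^ p) ^ p ≠ (x ^ p) ^ p
            ∧ (x ^ p) ^ p + ((x ^ p) ^ p) ^ p + (((x ^ p) ^ p) ^ p) ^ p = 0)
            ∧ φ ((x ^ p) ^ p) = ab := by
          refine ⟨⟨?_, htz⟩, ?_⟩
          · rw [pow_ppp]
            exact fun h => hdis.2.2 h
          · have h1 : (φ ((x ^ p) ^ p)).1 = ab.1 := by
              apply alg.injective
              rw [hφa ((x ^ p) ^ p), pow_ppp, hA]
              ring
            have h2 : (φ ((x ^ p) ^ p)).2 = ab.2 := by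
              apply alg.injective
              rw [hφb ((x ^ p) ^ p), pow_ppp, hB]
              ring
            exact Prod.ext h1 h2
        rintro (rfl | rfl | rfl)
        · exact hxmem
        · exact hymem
        · exact hzmem
    rw [key]
    rw [Finset.card_insert_of_notMem (by
        simp only [Finset.mem_insert, Finset.mem_singleton]
        push_neg
        exact ⟨hdis.1, hdis.2.2⟩),
      Finset.card_insert_of_notMem (by
        simp only [Finset.mem_singleton]
        exact hdis.2.1),
      Finset.card_singleton]
  rw [Finset.sum_congr rfl hfiber, Finset.sum_const, smul_eq_mul] at hcount
  have h1 : Nat.card {x : GaloisField p 3 // x ^ p ≠ x ∧ x + x ^ p + (x ^ p) ^ p = 0}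
      = Rf.card := by
    rw [Nat.card_eq_fintype_card, hRf, Fintype.card_subtype]
  have h2 : Nat.card {ab : ZMod p × ZMod p //
      Irreducible (X ^ 3 + C ab.1 * X + C ab.2 : (ZMod p)[X])} = Sf.card := by
    rw [Nat.card_eq_fintype_card, hSf, Fintype.card_subtype]
  rw [h1, h2, hcount, mul_comm]

private lemma card_R :
    Nat.card {x : GaloisField p 3 // x ^ p ≠ x ∧ x + x ^ p + (x ^ p) ^ p = 0}
      = p ^ 2 - (if p = 3 then 3 else 1) := by
  classical
  haveI : Fintype (GaloisField p 3) := Fintype.ofFinite _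
  set Tf : Finset (GaloisField p 3) :=
    univ.filter (fun x => x + x ^ p + (x ^ p) ^ p = 0) with hTf
  have hTcard : Tf.card = p ^ 2 := by
    rw [hTf, ← Fintype.card_subtype, ← Nat.card_eq_fintype_card, card_trace_ker]
  -- the fixed-point part
  have himg : Tf.filter (fun x => x ^ p = x)
      = (univ.filter fun c : ZMod p => c + c + c = 0).image
          (algebraMap (ZMod p) (GaloisField p 3)) := by
    ext w
    simp only [Finset.mem_filter, Finset.mem_image, Finset.mem_univ, true_and, hTf]
    constructor
    · rintro ⟨htw, hfw⟩
      obtain ⟨c, rfl⟩ := frob_fixed.mp hfw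
      refine ⟨c, ?_, rfl⟩
      have hfix : (algebraMap (ZMod p) (GaloisField p 3) c) ^ p
          = algebraMap (ZMod p) (GaloisField p 3) c := by rw [← map_pow, ZMod.pow_card]
      rw [hfix] at htw
      rw [hfix] at htw
      apply (algebraMap (ZMod p) (GaloisField p 3)).injective
      rw [map_add, map_add, map_zero]
      exact htw
    · rintro ⟨c, hc, rfl⟩
      have hfix : (algebraMap (ZMod p) (GaloisField p 3) c) ^ p
          = algebraMap (ZMod p) (GaloisField p 3) c := by rw [← map_pow, ZMod.pow_card]
      refine ⟨?_, hfix⟩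
      rw [hfix]
      rw [hfix]
      rw [← map_add, ← map_add, hc, map_zero]
  have himgcard : (Tf.filter (fun x => x ^ p = x)).card = if p = 3 then 3 else 1 := by
    rw [himg, Finset.card_image_of_injective _ (algebraMap (ZMod p) (GaloisField p 3)).injective]
    by_cases h3 : p = 3
    · subst h3
      rw [if_pos rfl]
      have hall : ∀ c : ZMod 3, c + c + c = 0 := by
        intro c
        have h0 : (3 : ZMod 3) = 0 := by exact_mod_cast ZMod.natCast_self 3
        linear_combination c * h0
      rw [Finset.filter_true_of_mem (fun c _ => hall c), Finset.card_univ, ZMod.card]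
    · rw [if_neg h3]
      have : (univ.filter fun c : ZMod p => c + c + c = 0) = {0} := by
        ext c
        simp only [Finset.mem_filter, Finset.mem_univ, true_and, Finset.mem_singleton]
        have h33 : (3 : ZMod p) ≠ 0 := by
          intro hh
          have := (ZMod.natCast_eq_zero_iff 3 p).mp (by exact_mod_cast hh)
          rcases (Nat.prime_dvd_prime_iff_eq (Fact.out : p.Prime) (by norm_num)).mp this with h
          exact h3 h
        constructor
        · intro hc
          have : (3 : ZMod p) * c = 0 := by linear_combination hc
          rcases mul_eq_zero.mp this with h | h
          · exact absurd h h33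
          · exact h
        · rintro rfl; ring
      rw [this, Finset.card_singleton]
  -- assemble
  have hsplit := Finset.card_filter_add_card_filter_not
    (s := Tf) (p := fun x => x ^ p = x)
  have hR : Nat.card {x : GaloisField p 3 // x ^ p ≠ x ∧ x + x ^ p + (x ^ p) ^ p = 0}
      = (Tf.filter (fun x => ¬ x ^ p = x)).card := by
    rw [Nat.card_eq_fintype_card, Fintype.card_subtype]
    congr 1
    rw [hTf, Finset.filter_filter]
    apply Finset.filter_congr
    intro x _
    tauto
  rw [hR]
  omega

end IrredCubicAux

theorem irreducible_trace_zero_cubic_count (p : ℕ) (hp : p.Prime) :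
    Nat.card {ab : ZMod p × ZMod p //
      Irreducible (Polynomial.X ^ 3 + Polynomial.C ab.1 * Polynomial.X + Polynomial.C ab.2)}
      = (p ^ 2 - 1) / 3 := by
  haveI := Fact.mk hp
  have h1 := IrredCubicAux.main_count (p := p)
  have h2 := IrredCubicAux.card_R (p := p)
  rw [h2] at h1
  by_cases h3 : p = 3
  · subst h3
    rw [if_pos rfl] at h1
    norm_num at h1 ⊢
    omega
  · rw [if_neg h3] at h1
    rw [h1, Nat.mul_div_cancel_left _ (by norm_num : 0 < 3)]
end

section
/- For a prime p, the number of monic cubic polynomials T^3 + aT + b over F_p that factor as Q(T)(T - α) with Q an irreducible monic quadratic over F_p equals (p^2 - p)/2. -/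
open Polynomial

section aux

variable {p : ℕ} [Fact p.Prime]

private lemma quad_monic (c d : ZMod p) : (X ^ 2 + C c * X + C d).Monic := by
  monicity!

private lemma quad_natDegree (c d : ZMod p) : (X ^ 2 + C c * X + C d).natDegree = 2 := by
  compute_degree!

private lemma quad_degree (c d : ZMod p) : (X ^ 2 + C c * X + C d).degree = 2 := by
  rw [degree_eq_natDegree (quad_monic c d).ne_zero, quad_natDegree]
  rfl

private lemma quad_coeff0 (c d : ZMod p) : (X ^ 2 + C c * X + C d).coeff 0 = d := by
  simp [coeff_X_pow]

private lemma quad_coeff1 (c d : ZMod p) : (X ^ 2 + C c * X + C d).coeff 1 = c := by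
  simp [coeff_X_pow]

private lemma mem_image {c d : ZMod p} (h : Irreducible (X ^ 2 + C c * X + C d)) :
    ∃ (Q : Polynomial (ZMod p)) (α : ZMod p), Q.Monic ∧ Q.degree = 2 ∧ Irreducible Q ∧
      X ^ 3 + C (d - c ^ 2) * X + C (-(c * d)) = Q * (X - C α) := by
  refine ⟨X ^ 2 + C c * X + C d, c, quad_monic _ _, quad_degree _ _, h, ?_⟩
  simp only [map_sub, map_neg, map_mul, map_pow]
  ring

end aux

theorem one_root_trace_zero_cubic_count (p : ℕ) (hp : p.Prime) :
    Nat.card {ab : ZMod p × ZMod p //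
      ∃ (Q : Polynomial (ZMod p)) (α : ZMod p), Q.Monic ∧ Q.degree = 2 ∧ Irreducible Q ∧
        Polynomial.X ^ 3 + Polynomial.C ab.1 * Polynomial.X + Polynomial.C ab.2
          = Q * (Polynomial.X - Polynomial.C α)}
      = (p ^ 2 - p) / 2 := by
  classical
  haveI : Fact p.Prime := ⟨hp⟩
  -- Step 1: bijection with irreducible monic quadratics (c,d) ↦ X^2 + cX + d
  have key : Nat.card {ab : ZMod p × ZMod p //
      ∃ (Q : Polynomial (ZMod p)) (α : ZMod p), Q.Monic ∧ Q.degree = 2 ∧ Irreducible Q ∧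
        X ^ 3 + C ab.1 * X + C ab.2 = Q * (X - C α)}
      = Nat.card {cd : ZMod p × ZMod p //
          Irreducible (X ^ 2 + C cd.1 * X + C cd.2)} := by
    symm
    apply Nat.card_eq_of_bijective
      (f := fun s => ⟨(s.1.2 - s.1.1 ^ 2, -(s.1.1 * s.1.2)), mem_image s.2⟩)
    constructor
    · rintro ⟨⟨c₁, d₁⟩, h₁⟩ ⟨⟨c₂, d₂⟩, h₂⟩ h
      simp only [Subtype.mk.injEq, Prod.mk.injEq] at h ⊢
      obtain ⟨ha, hb⟩ := h
      -- the two cubics coincide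
      have heq : (X ^ 2 + C c₁ * X + C d₁) * (X - C c₁)
          = (X ^ 2 + C c₂ * X + C d₂) * (X - C c₂) := by
        have e1 : (X ^ 2 + C c₁ * X + C d₁) * (X - C c₁)
            = X ^ 3 + C (d₁ - c₁ ^ 2) * X + C (-(c₁ * d₁)) := by
          simp only [map_sub, map_neg, map_mul, map_pow]; ring
        have e2 : (X ^ 2 + C c₂ * X + C d₂) * (X - C c₂)
            = X ^ 3 + C (d₂ - c₂ ^ 2) * X + C (-(c₂ * d₂)) := by
          simp only [map_sub, map_neg, map_mul, map_pow]; ring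
        rw [e1, e2, ha, hb]
      have hc : c₁ = c₂ := by
        by_contra hne
        have := congrArg (eval c₂) heq
        simp only [eval_mul, eval_add, eval_sub, eval_pow, eval_X, eval_C, sub_self,
          mul_zero] at this
        rcases mul_eq_zero.mp this with hz | hz
        · -- c₂ is a root of the first irreducible quadratic: contradiction
          have hni : ¬ Irreducible (X ^ 2 + C c₁ * X + C d₁) := by
            rw [(quad_monic c₁ d₁).not_irreducible_iff_exists_add_mul_eq_coeff
              (quad_natDegree c₁ d₁)]
            refine ⟨-c₂, c₁ + c₂, ?_, ?_⟩
            · rw [quad_coeff0]; linear_combination hz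
            · rw [quad_coeff1]; ring
          exact hni h₁
        · exact hne (by linear_combination -hz)
      refine ⟨hc, ?_⟩
      rw [hc] at ha
      linear_combination ha
    · rintro ⟨⟨a, b⟩, Q, α, hm, hdeg, hirr, heq⟩
      have hnd : Q.natDegree = 2 := natDegree_eq_of_degree_eq_some hdeg
      set c := Q.coeff 1 with hcdef
      set d := Q.coeff 0 with hddef
      have hQ : Q = X ^ 2 + C c * X + C d := by
        ext n
        match n with
        | 0 => simp [quad_coeff0, hddef]
        | 1 => simp [quad_coeff1, hcdef]
        | 2 =>
          have h2 := hm.coeff_natDegree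
          rw [hnd] at h2
          rw [h2]
          simp [coeff_X_pow]
        | (n + 3) =>
          rw [Q.coeff_eq_zero_of_natDegree_lt (by omega)]
          simp [coeff_X_pow, coeff_C]
      rw [hQ] at heq hirr
      -- expand the product
      have hexp : (X ^ 2 + C c * X + C d) * (X - C α)
          = X ^ 3 + C (c - α) * X ^ 2 + C (d - α * c) * X + C (-(α * d)) := by
        simp only [map_sub, map_neg, map_mul]; ring
      rw [hexp] at heq
      have h2 := congrArg (fun q => coeff q 2) heq
      have h1 := congrArg (fun q => coeff q 1) heq
      have h0 := congrArg (fun q => coeff q 0) heq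
      simp [coeff_X_pow, coeff_C_mul, sub_mul, coeff_sub] at h2 h1 h0
      -- h2 : 0 = c - α, h1 : a = d - α*c, h0 : b = -(α*d)
      have hα : α = c := by linear_combination h2
      refine ⟨⟨(c, d), hirr⟩, ?_⟩
      simp only [Subtype.mk.injEq, Prod.mk.injEq]
      subst hα
      exact ⟨by linear_combination -h1, by linear_combination -h0⟩
  rw [key]
  -- Step 2: count the non-irreducible quadratics via Sym2
  have hcompl : Nat.card {cd : ZMod p × ZMod p //
      ¬ Irreducible (X ^ 2 + C cd.1 * X + C cd.2)} = Nat.card (Sym2 (ZMod p)) := by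
    symm
    apply Nat.card_eq_of_bijective (f := fun z =>
      Sym2.lift ⟨fun r s => (⟨(r + s, r * s), by
        rw [(quad_monic _ _).not_irreducible_iff_exists_add_mul_eq_coeff
          (quad_natDegree _ _)]
        exact ⟨r, s, by rw [quad_coeff0], by rw [quad_coeff1]⟩⟩ :
          {cd : ZMod p × ZMod p // ¬ Irreducible (X ^ 2 + C cd.1 * X + C cd.2)}), by
        intro r s
        apply Subtype.ext
        simp only [Prod.mk.injEq]
        constructor <;> ring⟩ z)
    constructor
    · intro z₁ z₂
      induction z₁ using Sym2.ind with
      | _ r s =>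
      induction z₂ using Sym2.ind with
      | _ r' s' =>
      intro h
      simp only [Sym2.lift_mk, Subtype.mk.injEq, Prod.mk.injEq] at h
      obtain ⟨hs, hpr⟩ := h
      have hz : (r' - r) * (r' - s) = 0 := by linear_combination hpr - r' * hs
      rw [Sym2.eq_iff]
      rcases mul_eq_zero.mp hz with h | h
      · exact Or.inl ⟨by linear_combination -h, by linear_combination hs + h⟩
      · exact Or.inr ⟨by linear_combination hs + h, by linear_combination -h⟩
    · rintro ⟨⟨c, d⟩, hn⟩
      rw [(quad_monic _ _).not_irreducible_iff_exists_add_mul_eq_coeff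
        (quad_natDegree _ _)] at hn
      obtain ⟨c₁, c₂, h0, h1⟩ := hn
      rw [quad_coeff0] at h0
      rw [quad_coeff1] at h1
      exact ⟨Sym2.mk c₁ c₂, by
        apply Subtype.ext
        simp only [Sym2.lift_mk, Prod.mk.injEq]
        exact ⟨h1.symm, h0.symm⟩⟩
  -- Step 3: arithmetic
  have hsplit : Nat.card {cd : ZMod p × ZMod p //
        Irreducible (X ^ 2 + C cd.1 * X + C cd.2)}
      + Nat.card {cd : ZMod p × ZMod p //
        ¬ Irreducible (X ^ 2 + C cd.1 * X + C cd.2)} = p ^ 2 := by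
    rw [Nat.card_eq_fintype_card, Nat.card_eq_fintype_card,
      Fintype.card_subtype_compl, Nat.add_sub_cancel' (Fintype.card_subtype_le _)]
    simp [ZMod.card, sq]
  rw [hcompl] at hsplit
  have hs2 : 2 * Nat.card (Sym2 (ZMod p)) = p * p + p := by
    rw [Nat.card_eq_fintype_card, Sym2.card, ZMod.card, Nat.choose_two_right,
      Nat.add_sub_cancel]
    obtain ⟨k, hk⟩ : 2 ∣ (p + 1) * p := by
      simpa [mul_comm] using (Nat.even_mul_succ_self p).two_dvd
    rw [hk, Nat.mul_div_cancel_left _ (by norm_num), ← hk]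
    ring
  have hp2 : p ^ 2 = p * p := sq p
  omega
end

section
/- For every prime p ≥ 5, the rational number δ_p(1) defined by δ_p(1) = (p^{10}/(p^{10}-1)) · [ (p-1)/p + (p-1)^2/p^3 + (p-1)/p^3 + (p-1)/(2p^5) + (p^2-1)/(3p^7) + (p-1)/(2p^8) + (p-1)/p^{10} + ∑_{n ≥ 3, n odd} (p-1)^2/(2 p^{n+2}) ] equals 1 - p(6p^7 + 9p^6 + 9p^5 + 7p^4 + 8p^3 + 7p^2 + 9p + 6) / (6 (p+1)^2 (p^8 + p^6 + p^4 + p^2 + 1)). -/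
theorem delta_p_one_formula (p : ℕ) (hp : p.Prime) (hp5 : 5 ≤ p) :
    ((p : ℝ) ^ 10 / ((p : ℝ) ^ 10 - 1)) *
      (((p : ℝ) - 1) / p + ((p : ℝ) - 1) ^ 2 / (p : ℝ) ^ 3 + ((p : ℝ) - 1) / (p : ℝ) ^ 3
        + ((p : ℝ) - 1) / (2 * (p : ℝ) ^ 5) + ((p : ℝ) ^ 2 - 1) / (3 * (p : ℝ) ^ 7)
        + ((p : ℝ) - 1) / (2 * (p : ℝ) ^ 8) + ((p : ℝ) - 1) / (p : ℝ) ^ 10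
        + ∑' k : ℕ, ((p : ℝ) - 1) ^ 2 / (2 * (p : ℝ) ^ ((2 * k + 3) + 2)))
      = 1 - (p : ℝ) * (6 * (p : ℝ) ^ 7 + 9 * (p : ℝ) ^ 6 + 9 * (p : ℝ) ^ 5 + 7 * (p : ℝ) ^ 4
          + 8 * (p : ℝ) ^ 3 + 7 * (p : ℝ) ^ 2 + 9 * (p : ℝ) + 6) /
        (6 * ((p : ℝ) + 1) ^ 2 * ((p : ℝ) ^ 8 + (p : ℝ) ^ 6 + (p : ℝ) ^ 4 + (p : ℝ) ^ 2 + 1)) := by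
  have hx : (5 : ℝ) ≤ (p : ℝ) := by exact_mod_cast hp5
  have hx0 : (0 : ℝ) < (p : ℝ) := by linarith
  have hxne : (p : ℝ) ≠ 0 := ne_of_gt hx0
  have hr : |((p : ℝ) ^ 2)⁻¹| < 1 := by
    rw [abs_of_nonneg (by positivity)]
    rw [inv_lt_one_iff₀]
    right; nlinarith
  have hsum : (∑' k : ℕ, ((p : ℝ) - 1) ^ 2 / (2 * (p : ℝ) ^ ((2 * k + 3) + 2)))
      = ((p : ℝ) - 1) ^ 2 / (2 * (p : ℝ) ^ 5) * (1 - ((p : ℝ) ^ 2)⁻¹)⁻¹ := by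
    rw [← tsum_geometric_of_lt_one (by positivity) (by rw [abs_of_nonneg (by positivity)] at hr; exact hr),
      ← tsum_mul_left]
    congr 1; funext k
    have : (p : ℝ) ^ ((2 * k + 3) + 2) = (p : ℝ) ^ 5 * ((p : ℝ) ^ 2) ^ k := by
      rw [← pow_mul, ← pow_add]; ring_nf
    rw [this]
    field_simp
    rw [one_div, inv_pow, mul_assoc, mul_inv_cancel₀ (by positivity), mul_one]
  have h5 : (p : ℝ) ^ 2 - 1 ≠ 0 := by nlinarith
  have hsum2 : ((p : ℝ) - 1) ^ 2 / (2 * (p : ℝ) ^ 5) * (1 - ((p : ℝ) ^ 2)⁻¹)⁻¹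
      = ((p : ℝ) - 1) ^ 2 * (p : ℝ) ^ 2 / (2 * (p : ℝ) ^ 5 * ((p : ℝ) ^ 2 - 1)) := by
    rw [inv_eq_one_div]
    field_simp
  rw [hsum, hsum2]
  have h1 : ((p : ℝ) ^ 10 - 1) ≠ 0 := by nlinarith [pow_le_pow_left₀ (by norm_num : (0:ℝ) ≤ 5) hx 10, (by norm_num : (5:ℝ)^10 > 1)]
  have h2 : (1 - ((p : ℝ) ^ 2)⁻¹) ≠ 0 := by
    have : ((p : ℝ) ^ 2)⁻¹ < 1 := by rwa [abs_of_nonneg (by positivity)] at hr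
    linarith
  have h3 : ((p : ℝ) + 1) ≠ 0 := by linarith
  have h4 : ((p : ℝ) ^ 8 + (p : ℝ) ^ 6 + (p : ℝ) ^ 4 + (p : ℝ) ^ 2 + 1) ≠ 0 := by positivity
  field_simp
  ring
end

section
/- For every prime p ≥ 5, one has 1 - 1/p^2 < δ_p(1) < 1, where δ_p(1) = 1 - p(6p^7 + 9p^6 + 9p^5 + 7p^4 + 8p^3 + 7p^2 + 9p + 6)/(6 (p+1)^2 (p^8 + p^6 + p^4 + p^2 + 1)). -/
theorem delta_p_one_bounds (p : ℕ) (hp : p.Prime) (hp5 : 5 ≤ p) :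
    1 - 1 / (p : ℝ) ^ 2
      < 1 - (p : ℝ) * (6 * (p : ℝ) ^ 7 + 9 * (p : ℝ) ^ 6 + 9 * (p : ℝ) ^ 5 + 7 * (p : ℝ) ^ 4
            + 8 * (p : ℝ) ^ 3 + 7 * (p : ℝ) ^ 2 + 9 * (p : ℝ) + 6) /
          (6 * ((p : ℝ) + 1) ^ 2 * ((p : ℝ) ^ 8 + (p : ℝ) ^ 6 + (p : ℝ) ^ 4 + (p : ℝ) ^ 2 + 1)) ∧
    1 - (p : ℝ) * (6 * (p : ℝ) ^ 7 + 9 * (p : ℝ) ^ 6 + 9 * (p : ℝ) ^ 5 + 7 * (p : ℝ) ^ 4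
            + 8 * (p : ℝ) ^ 3 + 7 * (p : ℝ) ^ 2 + 9 * (p : ℝ) + 6) /
          (6 * ((p : ℝ) + 1) ^ 2 * ((p : ℝ) ^ 8 + (p : ℝ) ^ 6 + (p : ℝ) ^ 4 + (p : ℝ) ^ 2 + 1))
      < 1 := by
  have hx : (5 : ℝ) ≤ (p : ℝ) := by exact_mod_cast hp5
  set x : ℝ := (p : ℝ) with hxdef
  have hx0 : (0 : ℝ) < x := by linarith
  have hden : (0 : ℝ) < 6 * (x + 1) ^ 2 * (x ^ 8 + x ^ 6 + x ^ 4 + x ^ 2 + 1) := by positivity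
  have hnum : (0 : ℝ) < x * (6 * x ^ 7 + 9 * x ^ 6 + 9 * x ^ 5 + 7 * x ^ 4
      + 8 * x ^ 3 + 7 * x ^ 2 + 9 * x + 6) := by positivity
  constructor
  · have h1 : x * (6 * x ^ 7 + 9 * x ^ 6 + 9 * x ^ 5 + 7 * x ^ 4
        + 8 * x ^ 3 + 7 * x ^ 2 + 9 * x + 6) /
        (6 * (x + 1) ^ 2 * (x ^ 8 + x ^ 6 + x ^ 4 + x ^ 2 + 1)) < 1 / x ^ 2 := by
      rw [div_lt_div_iff₀ hden (by positivity)]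
      nlinarith [sq_nonneg x, pow_pos hx0 8, pow_pos hx0 6, sq_nonneg (x-5), pow_pos hx0 10]
    linarith
  · have h2 : 0 < x * (6 * x ^ 7 + 9 * x ^ 6 + 9 * x ^ 5 + 7 * x ^ 4
        + 8 * x ^ 3 + 7 * x ^ 2 + 9 * x + 6) /
        (6 * (x + 1) ^ 2 * (x ^ 8 + x ^ 6 + x ^ 4 + x ^ 2 + 1)) := by positivity
    linarith
end

section
/- The infinite product over all primes p of (1 - 1/p^{10}), multiplied by (255/256)/(1 - 1/2^{10}) and (19682/19683)/(1 - 1/3^{10}), equals 21342914775/(228811 π^{10}). Equivalently, (255/256)·(19682/19683)·∏_{p ≥ 5 prime}(1 - p^{-10}) = 21342914775/(228811 π^{10}). -/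
open Nat Finset Real

private theorem bern6 : bernoulli' 6 = 1 / 42 := by
  have h5 : bernoulli' 5 = 0 := bernoulli'_eq_zero_of_odd (by decide) (by norm_num)
  rw [bernoulli'_def]
  norm_num [Finset.sum_range_succ, h5, Nat.choose]

private theorem bern8 : bernoulli' 8 = -1 / 30 := by
  have h5 : bernoulli' 5 = 0 := bernoulli'_eq_zero_of_odd (by decide) (by norm_num)
  have h7 : bernoulli' 7 = 0 := bernoulli'_eq_zero_of_odd (by decide) (by norm_num)
  rw [bernoulli'_def]
  norm_num [Finset.sum_range_succ, h5, h7, bern6, Nat.choose]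

private theorem bern10 : bernoulli 10 = 5 / 66 := by
  have h5 : bernoulli' 5 = 0 := bernoulli'_eq_zero_of_odd (by decide) (by norm_num)
  have h7 : bernoulli' 7 = 0 := bernoulli'_eq_zero_of_odd (by decide) (by norm_num)
  have h9 : bernoulli' 9 = 0 := bernoulli'_eq_zero_of_odd (by decide) (by norm_num)
  rw [bernoulli_eq_bernoulli'_of_ne_one (by norm_num), bernoulli'_def]
  norm_num [Finset.sum_range_succ, h5, h7, h9, bern6, bern8, Nat.choose]

/-- The completely multiplicative function `n ↦ 1 / n ^ 10` on `ℕ`, valued in `ℝ`. -/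
noncomputable def zf10 : ℕ →*₀ ℝ where
  toFun n := 1 / (n : ℝ) ^ 10
  map_zero' := by norm_num
  map_one' := by norm_num
  map_mul' m n := by push_cast; rw [mul_pow]; rw [one_div, mul_inv, ← one_div, ← one_div]

private theorem zf10_summable : Summable (fun n : ℕ => ‖zf10 n‖) := by
  have h : Summable (fun n : ℕ => 1 / (n : ℝ) ^ 10) :=
    Real.summable_one_div_nat_pow.mpr (by norm_num)
  refine h.congr fun n => ?_
  have hz : zf10 n = 1 / (n : ℝ) ^ 10 := rfl
  rw [hz, Real.norm_eq_abs, abs_of_nonneg (by positivity)]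

private theorem zf10_tsum : ∑' n : ℕ, zf10 n = π ^ 10 / 93555 := by
  have h := (hasSum_zeta_nat (k := 5) (by norm_num)).tsum_eq
  have : (fun n : ℕ => zf10 n) = fun n : ℕ => 1 / (n : ℝ) ^ (2 * 5) := by
    ext n; simp [zf10]
  rw [this, h, bern10]
  rw [show (2 * 5 : ℕ) = 10 by norm_num]
  norm_num [Nat.factorial]
  ring

private theorem hasProd_one_sub : HasProd (fun p : Nat.Primes => 1 - 1 / (p : ℝ) ^ 10)
    (93555 / π ^ 10) := by
  have hP : HasProd (fun p : Nat.Primes => (1 - zf10 p)⁻¹) (π ^ 10 / 93555) := by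
    rw [← zf10_tsum]
    exact EulerProduct.eulerProduct_completely_multiplicative_hasProd zf10_summable
  have hL : (π ^ 10 / 93555 : ℝ) ≠ 0 := by positivity
  have hT : Filter.Tendsto (fun s : Finset Nat.Primes =>
      (∏ p ∈ s, (1 - zf10 p)⁻¹)⁻¹) Filter.atTop (nhds (π ^ 10 / 93555)⁻¹) := by
    simpa [HasProd, Finset.prod_inv_distrib] using hP.inv₀ hL
  have key : HasProd (fun p : Nat.Primes => 1 - zf10 p) (π ^ 10 / 93555)⁻¹ := by
    simpa [HasProd, ← Finset.prod_inv_distrib, inv_inv] using hT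
  have : (π ^ 10 / 93555 : ℝ)⁻¹ = 93555 / π ^ 10 := by
    rw [inv_div]
  rw [this] at key
  simpa [zf10] using key


private theorem one_sub_pos (p : Nat.Primes) : (0:ℝ) < 1 - 1 / (p : ℝ) ^ 10 := by
  have h2 : (2:ℝ) ≤ (p : ℕ) := by exact_mod_cast p.2.two_le
  have hpow : (2:ℝ) ^ 10 ≤ ((p : ℕ) : ℝ) ^ 10 := pow_le_pow_left₀ (by norm_num) h2 10
  have hle : 1 / ((p : ℕ) : ℝ) ^ 10 ≤ 1 / 2 ^ 10 :=
    one_div_le_one_div_of_le (by norm_num) hpow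
  have : (1:ℝ) / 2 ^ 10 < 1 := by norm_num
  linarith


private def Sfin : Finset Nat.Primes :=
  Finset.cons (@id Nat.Primes ⟨2, Nat.prime_two⟩) {@id Nat.Primes ⟨3, Nat.prime_three⟩}
    (by
      intro h
      exact absurd (congrArg Subtype.val (Finset.mem_singleton.mp h)) (by decide))

private theorem mem_Sfin (p : Nat.Primes) : p ∈ Sfin ↔ (p : ℕ) = 2 ∨ (p : ℕ) = 3 := by
  rw [Sfin, Finset.mem_cons, Finset.mem_singleton]
  constructor
  · rintro (h | h)
    · exact Or.inl (congrArg Subtype.val h)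
    · exact Or.inr (congrArg Subtype.val h)
  · rintro (h | h)
    · exact Or.inl (Subtype.ext h)
    · exact Or.inr (Subtype.ext h)

private def eqv : {q : ℕ // q.Prime ∧ 5 ≤ q} ≃ ↑((↑Sfin : Set Nat.Primes))ᶜ where
  toFun q := ⟨@id Nat.Primes ⟨q.1, q.2.1⟩, by
    have h5 := q.2.2
    rw [Set.mem_compl_iff, Finset.mem_coe, mem_Sfin]
    show ¬ (q.1 = 2 ∨ q.1 = 3)
    omega⟩
  invFun p := ⟨p.1.1, p.1.2, by
    have h2 := p.2
    simp only [Set.mem_compl_iff, Finset.mem_coe, mem_Sfin, not_or] at h2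
    have hp := p.1.2
    have h4 : (p.1 : ℕ) ≠ 4 := fun h => by rw [h] at hp; exact (by norm_num : ¬ Nat.Prime 4) hp
    have := hp.two_le
    omega⟩
  left_inv q := rfl
  right_inv p := rfl

private noncomputable def corr : Nat.Primes → ℝ :=
  fun p => if p ∈ Sfin then (1 - 1 / (p : ℝ) ^ 10)⁻¹ else 1

private theorem hasProd_corr :
    HasProd corr ((1 - 1/2^10 : ℝ)⁻¹ * (1 - 1/3^10 : ℝ)⁻¹) := by
  have h := hasProd_prod_of_ne_finset_one (s := Sfin) (f := corr) (L := SummationFilter.unconditional _) (fun b hb => if_neg hb)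
  rw [show (∏ b ∈ Sfin, corr b) = corr (@id Nat.Primes ⟨2, Nat.prime_two⟩) * ∏ b ∈ {@id Nat.Primes ⟨3, Nat.prime_three⟩}, corr b
      from Finset.prod_cons _, Finset.prod_singleton] at h
  have h2 : corr (@id Nat.Primes ⟨2, Nat.prime_two⟩) = (1 - 1/2^10 : ℝ)⁻¹ := by
    rw [corr, if_pos (by rw [mem_Sfin]; decide)]
    show (1 - 1 / ((2:ℕ):ℝ) ^ 10)⁻¹ = (1 - 1/2^10 : ℝ)⁻¹
    norm_num
  have h3 : corr (@id Nat.Primes ⟨3, Nat.prime_three⟩) = (1 - 1/3^10 : ℝ)⁻¹ := by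
    rw [corr, if_pos (by rw [mem_Sfin]; decide)]
    show (1 - 1 / ((3:ℕ):ℝ) ^ 10)⁻¹ = (1 - 1/3^10 : ℝ)⁻¹
    norm_num
  rwa [h2, h3] at h

private theorem tprod_ge5 :
    (∏' q : {q : ℕ // q.Prime ∧ 5 ≤ q}, (1 - 1 / (q : ℝ) ^ 10))
      = (93555 / π ^ 10) * ((1 - 1/2^10 : ℝ)⁻¹ * (1 - 1/3^10 : ℝ)⁻¹) := by
  have hind : Set.mulIndicator ((↑Sfin : Set Nat.Primes))ᶜ
      (fun p : Nat.Primes => 1 - 1 / (p : ℝ) ^ 10)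
      = (fun p : Nat.Primes => 1 - 1 / (p : ℝ) ^ 10) * corr := by
    funext p
    by_cases hp : p ∈ Sfin
    · rw [Set.mulIndicator_of_notMem (by simpa using hp)]
      have hnz : (1 - 1 / (p : ℝ) ^ 10) ≠ 0 := ne_of_gt (one_sub_pos p)
      rw [Pi.mul_apply, corr, if_pos hp, mul_inv_cancel₀ hnz]
    · rw [Set.mulIndicator_of_mem (by simpa using hp)]
      simp [corr, hp]
  have hMulInd : HasProd (Set.mulIndicator ((↑Sfin : Set Nat.Primes))ᶜ
      (fun p : Nat.Primes => 1 - 1 / (p : ℝ) ^ 10))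
      ((93555 / π ^ 10) * ((1 - 1/2^10 : ℝ)⁻¹ * (1 - 1/3^10 : ℝ)⁻¹)) := by
    rw [hind]; exact hasProd_one_sub.mul hasProd_corr
  have hSub : HasProd ((fun p : Nat.Primes => 1 - 1 / (p : ℝ) ^ 10) ∘ (↑) :
        ↑((↑Sfin : Set Nat.Primes))ᶜ → ℝ)
      ((93555 / π ^ 10) * ((1 - 1/2^10 : ℝ)⁻¹ * (1 - 1/3^10 : ℝ)⁻¹)) :=
    hasProd_subtype_iff_mulIndicator.mpr hMulInd
  have h := (Equiv.hasProd_iff eqv).mpr hSub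
  have hfun : (((fun p : Nat.Primes => 1 - 1 / (p : ℝ) ^ 10) ∘ (↑)) ∘ ⇑eqv)
      = fun q : {q : ℕ // q.Prime ∧ 5 ≤ q} => 1 - 1 / (q : ℝ) ^ 10 := by
    funext q; rfl
  rw [hfun] at h
  exact h.tprod_eq

open Real in
theorem minimal_model_density :
    (255 / 256 : ℝ) * (19682 / 19683) *
      (∏' q : {q : ℕ // q.Prime ∧ 5 ≤ q}, (1 - 1 / (q : ℝ) ^ 10))
      = 21342914775 / (228811 * π ^ 10) := by
  rw [tprod_ge5]
  have hπ : (π : ℝ) ^ 10 ≠ 0 := by positivity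
  field_simp
  ring
end

section
/- For every prime p ≥ 5, the sum δ_p(3) + δ_p(4) + ∑_{c ≥ 5} δ_p(c), where δ_p(3) = p^2(p^4+1)/(2(p+1)(p^8+p^6+p^4+p^2+1)), δ_p(4) = p^3(3p^2-2p-1)/(6(p+1)(p^8+p^6+p^4+p^2+1)), and δ_p(c) = (p^{10}-2p^9+p^8)/(2 p^c (p^{10}-1)) for c ≥ 5, is strictly less than 2/p^2. -/
theorem tamagawa_tail_bound (p : ℕ) (hp : p.Prime) (hp5 : 5 ≤ p) :
    (p : ℝ) ^ 2 * ((p : ℝ) ^ 4 + 1) /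
        (2 * ((p : ℝ) + 1) * ((p : ℝ) ^ 8 + (p : ℝ) ^ 6 + (p : ℝ) ^ 4 + (p : ℝ) ^ 2 + 1))
      + (p : ℝ) ^ 3 * (3 * (p : ℝ) ^ 2 - 2 * (p : ℝ) - 1) /
        (6 * ((p : ℝ) + 1) * ((p : ℝ) ^ 8 + (p : ℝ) ^ 6 + (p : ℝ) ^ 4 + (p : ℝ) ^ 2 + 1))
      + (∑' k : ℕ, ((p : ℝ) ^ 10 - 2 * (p : ℝ) ^ 9 + (p : ℝ) ^ 8) /
          (2 * (p : ℝ) ^ (k + 5) * ((p : ℝ) ^ 10 - 1)))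
      < 2 / (p : ℝ) ^ 2 := by
  set x : ℝ := (p : ℝ) with hxdef
  have hx5 : (5 : ℝ) ≤ x := by rw [hxdef]; exact_mod_cast hp5
  have hx0 : (0 : ℝ) < x := by linarith
  have hxne : x ≠ 0 := ne_of_gt hx0
  have hgeo : ∑' k : ℕ, (x ^ 10 - 2 * x ^ 9 + x ^ 8) /
      (2 * x ^ (k + 5) * (x ^ 10 - 1))
      = ((x ^ 10 - 2 * x ^ 9 + x ^ 8) / (2 * x ^ 5 * (x ^ 10 - 1))) * (1 - x⁻¹)⁻¹ := by
    have h1 : ∀ k : ℕ, (x ^ 10 - 2 * x ^ 9 + x ^ 8) / (2 * x ^ (k + 5) * (x ^ 10 - 1))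
        = ((x ^ 10 - 2 * x ^ 9 + x ^ 8) / (2 * x ^ 5 * (x ^ 10 - 1))) * x⁻¹ ^ k := by
      intro k
      rw [pow_add, inv_pow]
      field_simp
    rw [tsum_congr h1, tsum_mul_left, tsum_geometric_of_lt_one (by positivity)
      (by rw [inv_lt_one_iff₀]; right; linarith)]
  rw [hgeo]
  have hinv : (1 - x⁻¹)⁻¹ = x / (x - 1) := by
    rw [inv_eq_iff_eq_inv, eq_comm, inv_eq_iff_eq_inv]
    field_simp
  rw [hinv]
  have hD : (0 : ℝ) < x ^ 8 + x ^ 6 + x ^ 4 + x ^ 2 + 1 := by positivity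
  have hx1 : (0 : ℝ) < x - 1 := by linarith
  have h10 : (0 : ℝ) < x ^ 10 - 1 := by
    have h1x : (1 : ℝ) < x := by linarith
    have := one_lt_pow₀ h1x (by norm_num : (10:ℕ) ≠ 0)
    linarith
  have key : x ^ 2 * (x ^ 4 + 1) / (2 * (x + 1) * (x ^ 8 + x ^ 6 + x ^ 4 + x ^ 2 + 1))
      + x ^ 3 * (3 * x ^ 2 - 2 * x - 1) / (6 * (x + 1) * (x ^ 8 + x ^ 6 + x ^ 4 + x ^ 2 + 1))
      + (x ^ 10 - 2 * x ^ 9 + x ^ 8) / (2 * x ^ 5 * (x ^ 10 - 1)) * (x / (x - 1))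
      = (3 * x ^ 6 + 3 * x ^ 5 + x ^ 4 - x ^ 3 + 3 * x ^ 2)
        / (6 * (x + 1) * (x ^ 8 + x ^ 6 + x ^ 4 + x ^ 2 + 1)) := by
    have h10' : x ^ 10 - 1 = (x - 1) * (x + 1) * (x ^ 8 + x ^ 6 + x ^ 4 + x ^ 2 + 1) := by ring
    rw [h10']
    field_simp
    ring
  rw [key, div_lt_div_iff₀ (by positivity) (by positivity)]
  nlinarith [pow_pos hx0 2, pow_pos hx0 3, pow_pos hx0 4, pow_pos hx0 5, pow_pos hx0 6,
    pow_pos hx0 8, pow_pos hx0 9, pow_pos hx0 10, mul_pos hD hx0]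
end

section
/- Let p ≥ 5 be prime and a4, a6 be p-adic integers with v_p(4 a4^3) = v_p(27 a6^2) < v_p(4a4^3 + 27a6^2) and v_p(a4) = 0. Then -3·a4 is a square in Z_p, and writing a4 = -3t^2 with t ∈ Z_p^× (for an appropriate choice of sign of t) there exists s ∈ Z_p such that a6 = 2t^3 + s with v_p(s) = v_p(4a4^3 + 27a6^2). -/
private lemma padic_val_eq_of_norm_eq {p : ℕ} [Fact p.Prime] {x y : ℤ_[p]} (hx : x ≠ 0)
    (hy : y ≠ 0) (h : ‖x‖ = ‖y‖) : x.valuation = y.valuation := by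
  have hp1 : (1:ℝ) < p := by exact_mod_cast (Fact.out : p.Prime).one_lt
  rw [PadicInt.norm_eq_zpow_neg_valuation hx, PadicInt.norm_eq_zpow_neg_valuation hy] at h
  have := zpow_right_injective₀ (by linarith) (ne_of_gt hp1) h
  omega

private lemma padic_val_zero_of_norm_one {p : ℕ} [Fact p.Prime] {x : ℤ_[p]}
    (h : ‖x‖ = 1) : x.valuation = 0 := by
  have hx : x ≠ 0 := by intro h0; rw [h0, norm_zero] at h; norm_num at h
  have hp1 : (1:ℝ) < p := by exact_mod_cast (Fact.out : p.Prime).one_lt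
  rw [PadicInt.norm_eq_zpow_neg_valuation hx] at h
  have h1 : ((p:ℝ)) ^ (-(x.valuation:ℤ)) = (p:ℝ) ^ (0:ℤ) := by rw [zpow_zero]; exact h
  have := zpow_right_injective₀ (by linarith) (ne_of_gt hp1) h1
  omega

theorem padic_normal_form (p : ℕ) [Fact p.Prime] (hp5 : 5 ≤ p)
    (a4 a6 : ℤ_[p]) (hΔ : 4 * a4 ^ 3 + 27 * a6 ^ 2 ≠ 0)
    (heq : (4 * a4 ^ 3).valuation = (27 * a6 ^ 2).valuation)
    (hlt : (4 * a4 ^ 3).valuation < (4 * a4 ^ 3 + 27 * a6 ^ 2).valuation)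
    (hu : a4.valuation = 0) :
    (∃ u : ℤ_[p], u ^ 2 = -3 * a4) ∧
      ∃ t s : ℤ_[p], IsUnit t ∧ a4 = -3 * t ^ 2 ∧ a6 = 2 * t ^ 3 + s ∧
        s.valuation = (4 * a4 ^ 3 + 27 * a6 ^ 2).valuation := by
  have hp : p.Prime := Fact.out
  have hp1 : (1:ℝ) < p := by exact_mod_cast hp.one_lt
  -- norms of small integer constants
  have hnorm_int : ∀ k : ℤ, 0 < k → k < 5 → ‖(k : ℤ_[p])‖ = 1 := by
    intro k hk0 hk5
    refine le_antisymm (PadicInt.norm_le_one _) (not_lt.1 fun h => ?_)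
    have hdvd := (PadicInt.norm_int_lt_one_iff_dvd k).1 h
    have := Int.le_of_dvd hk0 hdvd
    omega
  have n2 : ‖(2:ℤ_[p])‖ = 1 := by
    have := hnorm_int 2 (by norm_num) (by norm_num); exact_mod_cast this
  have n3 : ‖(3:ℤ_[p])‖ = 1 := by
    have := hnorm_int 3 (by norm_num) (by norm_num); exact_mod_cast this
  have n4 : ‖(4:ℤ_[p])‖ = 1 := by
    have : (4:ℤ_[p]) = 2 * 2 := by norm_num
    rw [this, norm_mul, n2]; norm_num
  have n27 : ‖(27:ℤ_[p])‖ = 1 := by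
    have : (27:ℤ_[p]) = 3 * 3 * 3 := by norm_num
    rw [this, norm_mul, norm_mul, n3]; norm_num
  have n9 : ‖(9:ℤ_[p])‖ = 1 := by
    have : (9:ℤ_[p]) = 3 * 3 := by norm_num
    rw [this, norm_mul, n3]; norm_num
  -- nonvanishing
  have ha4 : a4 ≠ 0 := by
    rintro rfl
    rw [show (4:ℤ_[p]) * 0 ^ 3 = 0 by ring, PadicInt.valuation_zero] at heq hlt
    rw [zero_add, ← heq] at hlt
    exact lt_irrefl _ hlt
  have na4 : ‖a4‖ = 1 := by
    rw [PadicInt.norm_eq_zpow_neg_valuation ha4, hu]; norm_num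
  have nA : ‖4 * a4 ^ 3‖ = 1 := by rw [norm_mul, norm_pow, na4, n4]; norm_num
  have hAne : (4 * a4 ^ 3 : ℤ_[p]) ≠ 0 := by
    intro h; rw [h, norm_zero] at nA; norm_num at nA
  have hBne : (27 * a6 ^ 2 : ℤ_[p]) ≠ 0 := by
    intro h
    rw [h, PadicInt.valuation_zero] at heq
    have vA := padic_val_zero_of_norm_one nA
    rw [vA, h, add_zero] at hlt
    omega
  have nB : ‖27 * a6 ^ 2‖ = 1 := by
    rw [PadicInt.norm_eq_zpow_neg_valuation hBne, ← heq, ← PadicInt.norm_eq_zpow_neg_valuation hAne]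
    exact nA
  have na6 : ‖a6‖ = 1 := by
    rw [norm_mul, norm_pow, n27, one_mul] at nB
    nlinarith [norm_nonneg a6]
  -- ‖Δ‖ < 1
  have vA : (4 * a4 ^ 3 : ℤ_[p]).valuation = 0 := padic_val_zero_of_norm_one nA
  have nΔ : ‖4 * a4 ^ 3 + 27 * a6 ^ 2‖ < 1 := by
    rw [PadicInt.norm_eq_zpow_neg_valuation hΔ]
    calc (p:ℝ) ^ (-((4 * a4 ^ 3 + 27 * a6 ^ 2 : ℤ_[p]).valuation:ℤ))
        < (p:ℝ) ^ (0:ℤ) := zpow_lt_zpow_right₀ hp1 (by omega)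
      _ = 1 := zpow_zero _
  -- inverses of 2*a4 and 3
  obtain ⟨w, hw⟩ : IsUnit (2 * a4 : ℤ_[p]) :=
    PadicInt.isUnit_iff.2 (by rw [norm_mul, n2, na4]; norm_num)
  set b : ℤ_[p] := ((w⁻¹ : ℤ_[p]ˣ) : ℤ_[p]) with hbdef
  have hb : (2 * a4) * b = 1 := by rw [← hw, hbdef]; exact_mod_cast w.mul_inv
  have nb : ‖b‖ = 1 := PadicInt.norm_units _
  obtain ⟨w3, hw3⟩ : IsUnit (3 : ℤ_[p]) := PadicInt.isUnit_iff.2 n3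
  set c : ℤ_[p] := ((w3⁻¹ : ℤ_[p]ˣ) : ℤ_[p]) with hcdef
  have hc : (3 : ℤ_[p]) * c = 1 := by rw [← hw3, hcdef]; exact_mod_cast w3.mul_inv
  have nc : ‖c‖ = 1 := PadicInt.norm_units _
  -- Hensel's lemma for X^2 + 3*a4 at the point 9*a6*b
  set F : Polynomial ℤ_[p] := Polynomial.X ^ 2 + Polynomial.C (3 * a4) with hFdef
  set a : ℤ_[p] := 9 * a6 * b with hadef
  have hFeval : ∀ x : ℤ_[p], F.eval x = x ^ 2 + 3 * a4 := by
    intro x; simp [hFdef]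
  have hFderiv : ∀ x : ℤ_[p], F.derivative.eval x = 2 * x := by
    intro x
    have : F.derivative = Polynomial.C 2 * Polynomial.X := by
      rw [hFdef]; simp [Polynomial.derivative_X_pow]
      rw [one_add_one_eq_two]; exact (map_ofNat Polynomial.C 2).symm
    rw [this]; simp
  have heval : F.eval a = 3 * b ^ 2 * (4 * a4 ^ 3 + 27 * a6 ^ 2) := by
    rw [hFeval, hadef]
    linear_combination (-(3*a4)*(2*a4*b+1)) * hb
  have na' : ‖a‖ = 1 := by rw [hadef, norm_mul, norm_mul, n9, na6, nb]; norm_num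
  have hnorm : ‖F.eval a‖ < ‖F.derivative.eval a‖ ^ 2 := by
    rw [heval, hFderiv, norm_mul, norm_mul, norm_pow, n3, nb, norm_mul, n2, na']
    simpa using nΔ
  obtain ⟨z, hz, -, hzd, -⟩ := hensels_lemma (F := F) (a := a) hnorm
  replace hz : F.eval z = 0 := hz
  replace hzd : ‖F.derivative.eval z‖ = ‖F.derivative.eval a‖ := hzd
  rw [hFeval] at hz
  have hz2 : z ^ 2 = -3 * a4 := by linear_combination hz
  refine ⟨⟨z, hz2⟩, ?_⟩
  -- norm of z
  have nz : ‖z‖ = 1 := by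
    rw [hFderiv, hFderiv, norm_mul, norm_mul, n2, na'] at hzd
    rw [one_mul, mul_one] at hzd
    exact hzd
  -- t0 = z / 3
  set t0 : ℤ_[p] := z * c with ht0def
  have ht0 : a4 = -3 * t0 ^ 2 := by
    rw [ht0def]
    linear_combination (3*c^2) * hz2 + (-(a4)*(3*c+1)) * hc
  have nt0 : ‖t0‖ = 1 := by rw [ht0def, norm_mul, nz, nc]; norm_num
  have key : 27 * ((a6 - 2 * t0 ^ 3) * (a6 + 2 * t0 ^ 3)) = 4 * a4 ^ 3 + 27 * a6 ^ 2 := by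
    linear_combination (-4*(a4^2 + (-3*t0^2)*a4 + 9*t0^4)) * ht0
  have hprod : ‖a6 - 2 * t0 ^ 3‖ * ‖a6 + 2 * t0 ^ 3‖ = ‖4 * a4 ^ 3 + 27 * a6 ^ 2‖ := by
    rw [← key, norm_mul, norm_mul, n27, one_mul]
  have hsum : (1:ℝ) ≤ max ‖a6 + 2 * t0 ^ 3‖ ‖a6 - 2 * t0 ^ 3‖ := by
    have h4t : ‖(4 : ℤ_[p]) * t0 ^ 3‖ = 1 := by rw [norm_mul, norm_pow, n4, nt0]; norm_num
    have hdecomp : (4 : ℤ_[p]) * t0 ^ 3 = (a6 + 2 * t0 ^ 3) + (-(a6 - 2 * t0 ^ 3)) := by ring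
    calc (1:ℝ) = ‖(4 : ℤ_[p]) * t0 ^ 3‖ := h4t.symm
      _ ≤ max ‖a6 + 2 * t0 ^ 3‖ ‖-(a6 - 2 * t0 ^ 3)‖ := by
          rw [hdecomp]; exact PadicInt.nonarchimedean _ _
      _ = max ‖a6 + 2 * t0 ^ 3‖ ‖a6 - 2 * t0 ^ 3‖ := by rw [norm_neg]
  by_cases hcase : ‖a6 + 2 * t0 ^ 3‖ = 1
  · -- s = a6 - 2 t0^3
    have hs : ‖a6 - 2 * t0 ^ 3‖ = ‖4 * a4 ^ 3 + 27 * a6 ^ 2‖ := by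
      rw [hcase, mul_one] at hprod; exact hprod
    have hsne : a6 - 2 * t0 ^ 3 ≠ 0 := by
      intro h; rw [h, norm_zero] at hs
      exact hΔ (norm_eq_zero.1 hs.symm)
    exact ⟨t0, a6 - 2 * t0 ^ 3, PadicInt.isUnit_iff.2 nt0, ht0, by ring,
      padic_val_eq_of_norm_eq hsne hΔ hs⟩
  · -- s = a6 + 2 t0^3, t = -t0
    have hlt1 : ‖a6 + 2 * t0 ^ 3‖ < 1 := lt_of_le_of_ne (PadicInt.norm_le_one _) hcase
    have hm : ‖a6 - 2 * t0 ^ 3‖ = 1 := by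
      rcases le_max_iff.1 hsum with h | h
      · linarith
      · exact le_antisymm (PadicInt.norm_le_one _) h
    have hs : ‖a6 + 2 * t0 ^ 3‖ = ‖4 * a4 ^ 3 + 27 * a6 ^ 2‖ := by
      rw [hm, one_mul] at hprod; exact hprod
    have hsne : a6 + 2 * t0 ^ 3 ≠ 0 := by
      intro h; rw [h, norm_zero] at hs
      exact hΔ (norm_eq_zero.1 hs.symm)
    refine ⟨-t0, a6 + 2 * t0 ^ 3, (PadicInt.isUnit_iff.2 nt0).neg, by rw [ht0]; ring,
      by ring, padic_val_eq_of_norm_eq hsne hΔ hs⟩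
end
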